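/- Let n ≥ 2 be an integer and a > c > 0 reals. Define the γ-characteristic function by v_γ^n(s) = (a-c)²/(n-s+2)² for 1 ≤ s ≤ n-1 and v_γ^n(n) = (a-c)²/4. Then every core allocation of the uniform-distribution game (Fin n, v^n) is a core allocation of (Fin n, v_γ^n); that is, the core of (N,v) is a subset of the γ-core. -/

import Mathlib

/-- Stirling number of the second kind (as a real number):
`K m j = (1/j!) · Σ_{i=0}^{j} (-1)^i · C(j,i) · (j-i)^m`. -/
noncomputable def K (m j : ℕ) : ℝ :=
  (1 / (Nat.factorial j : ℝ)) *
    ∑ i ∈ Finset.range (j + 1), (-1 : ℝ) ^ i * (Nat.choose j i : ℝ) * ((j - i : ℕ) : ℝ) ^ m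

/-- Bell number `B m = Σ_{j=1}^{m} K m j`. -/
noncomputable def B (m : ℕ) : ℝ := ∑ j ∈ Finset.Icc 1 m, K m j

/-- Uniform partition distribution: `f n s j = K (n-s) j / B (n-s)`. -/
noncomputable def f (n s j : ℕ) : ℝ := K (n - s) j / B (n - s)

/-- `F n s = Σ_{j=1}^{n-s} j · f n s j / (j+1)`. -/
noncomputable def F (n s : ℕ) : ℝ :=
  ∑ j ∈ Finset.Icc 1 (n - s), (j : ℝ) * f n s j / ((j : ℝ) + 1)

/-- Value of a coalition of size `s` in the `n`-firm uniform-distribution game: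
`v^n(n) = (a-c)²/4`, `v^n(0) = 0`, and for `1 ≤ s ≤ n-1`,
`v^n(s) = (a-c)² · (1-F)/(2-F)² · Σ_{j=1}^{n-s} f n s j / (j+1)`. -/
noncomputable def v (a c : ℝ) (n s : ℕ) : ℝ :=
  if s = n then (a - c) ^ 2 / 4
  else if s = 0 then 0
  else (a - c) ^ 2 * ((1 - F n s) / (2 - F n s) ^ 2) *
    ∑ j ∈ Finset.Icc 1 (n - s), f n s j / ((j : ℝ) + 1)

/-! The weights `f n s ·` are a probability distribution on `{1, …, m}`, `m = n - s`, because
`K m ·` are the Stirling numbers of the second kind (they satisfy the same recurrence), so they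
are nonnegative and `B m ≥ K m 1 = 1`. Hence `u := 1 - F = Σ f j / (j + 1) ≥ 1 / (m + 1)`, and
`v^n(s) = (a - c)² (u / (1 + u))² ≥ (a - c)² / (m + 2)² = v_γ^n(s)` since `u ↦ u / (1 + u)` is
increasing. So each core inequality of `v` implies that of `v_γ`; the grand coalition has the
same value in both games. -/

open Finset

noncomputable def stirlingSum (m j : ℕ) : ℝ :=
  ∑ i ∈ range (j + 1), (-1 : ℝ) ^ i * (j.choose i : ℝ) * ((j - i : ℕ) : ℝ) ^ m

lemma K_eq_stirlingSum_div (m j : ℕ) : K m j = stirlingSum m j / j.factorial := by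
  rw [K, stirlingSum, one_div, inv_mul_eq_div]

lemma stirlingSum_zero_left (j : ℕ) : stirlingSum 0 j = if j = 0 then 1 else 0 := by
  simpa [stirlingSum] using congrArg (Int.cast : ℤ → ℝ) (Int.alternating_sum_range_choose (n := j))

lemma stirlingSum_succ_zero (m : ℕ) : stirlingSum (m + 1) 0 = 0 := by
  simp [stirlingSum]

lemma stirlingSum_succ_succ (m j : ℕ) :
    stirlingSum (m + 1) (j + 1) = (j + 1) * stirlingSum m (j + 1) + (j + 1) * stirlingSum m j := by
  -- `(j+1-i)^(m+1) = (j+1)(j+1-i)^m - i(j+1-i)^m`, and `i C(j+1,i) = (j+1) C(j,i-1)` turns the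
  -- second part into a sum over `range (j + 1)`
  have hsplit : ∀ i ∈ range (j + 2),
      (-1 : ℝ) ^ i * ((j + 1).choose i : ℝ) * ((j + 1 - i : ℕ) : ℝ) ^ (m + 1)
        = (j + 1) * ((-1 : ℝ) ^ i * ((j + 1).choose i : ℝ) * ((j + 1 - i : ℕ) : ℝ) ^ m)
          - i * (-1 : ℝ) ^ i * ((j + 1).choose i : ℝ) * ((j + 1 - i : ℕ) : ℝ) ^ m := by
    intro i hi
    rw [Nat.cast_sub (by simpa [Nat.lt_succ_iff] using hi)]
    push_cast
    ring
  have hshift : ∑ i ∈ range (j + 2),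
      i * (-1 : ℝ) ^ i * ((j + 1).choose i : ℝ) * ((j + 1 - i : ℕ) : ℝ) ^ m
        = -((j + 1) * stirlingSum m j) := by
    rw [sum_range_succ', stirlingSum, mul_sum, ← sum_neg_distrib]
    simp only [Nat.cast_zero, zero_mul, add_zero]
    refine sum_congr rfl fun i _ => ?_
    have hchoose :
        ((i + 1 : ℕ) : ℝ) * ((j + 1).choose (i + 1) : ℝ) = (j + 1) * (j.choose i : ℝ) := by
      exact_mod_cast ((Nat.add_one_mul_choose_eq j i).trans (mul_comm _ _)).symm
    rw [show j + 1 - (i + 1) = j - i by omega, pow_succ]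
    linear_combination (-(-1 : ℝ) ^ i * ((j - i : ℕ) : ℝ) ^ m) * hchoose
  rw [stirlingSum, sum_congr rfl hsplit, sum_sub_distrib, ← mul_sum, hshift, sub_neg_eq_add]
  rfl

lemma K_eq_stirlingSecond (m j : ℕ) : K m j = Nat.stirlingSecond m j := by
  induction m generalizing j with
  | zero => cases j <;> simp [K_eq_stirlingSum_div, stirlingSum_zero_left]
  | succ m ih =>
    cases j with
    | zero => simp [K_eq_stirlingSum_div, stirlingSum_succ_zero]
    | succ j =>
      have hfac : ((j + 1).factorial : ℝ) = (j + 1) * j.factorial := by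
        push_cast [Nat.factorial_succ]
        ring
      have h := ih (j + 1)
      have h' := ih j
      rw [K_eq_stirlingSum_div] at h h' ⊢
      rw [Nat.stirlingSecond_succ_succ, stirlingSum_succ_succ, hfac]
      push_cast
      rw [← h, ← h', hfac]
      field_simp

lemma K_nonneg (m j : ℕ) : 0 ≤ K m j := by
  rw [K_eq_stirlingSecond]
  positivity

lemma B_pos {m : ℕ} (hm : m ≠ 0) : 0 < B m := by
  obtain ⟨m, rfl⟩ := Nat.exists_eq_succ_of_ne_zero hm
  calc (0 : ℝ) < K (m + 1) 1 := by
        norm_num [K_eq_stirlingSecond, Nat.stirlingSecond_one_right]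
    _ ≤ B (m + 1) := single_le_sum (fun j _ => K_nonneg (m + 1) j) (by simp)

lemma f_nonneg (n s j : ℕ) : 0 ≤ f n s j :=
  div_nonneg (K_nonneg _ _) (sum_nonneg fun _ _ => K_nonneg _ _)

lemma sum_f_eq_one {n s : ℕ} (h : s < n) : ∑ j ∈ Icc 1 (n - s), f n s j = 1 := by
  unfold f
  rw [← sum_div, ← B, div_self (B_pos (by omega)).ne']

lemma one_sub_F_eq_sum {n s : ℕ} (h : s < n) :
    1 - F n s = ∑ j ∈ Icc 1 (n - s), f n s j / ((j : ℝ) + 1) := by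
  nth_rw 1 [← sum_f_eq_one h]
  rw [F, ← sum_sub_distrib]
  refine sum_congr rfl fun j _ => ?_
  field_simp
  ring

lemma inv_succ_le_sum_div_succ {M : ℕ} {p : ℕ → ℝ} (hp : ∀ j ∈ Icc 1 M, 0 ≤ p j)
    (hsum : ∑ j ∈ Icc 1 M, p j = 1) : ((M : ℝ) + 1)⁻¹ ≤ ∑ j ∈ Icc 1 M, p j / ((j : ℝ) + 1) := by
  calc ((M : ℝ) + 1)⁻¹ = ∑ j ∈ Icc 1 M, p j / ((M : ℝ) + 1) := by rw [← sum_div, hsum, one_div]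
    _ ≤ ∑ j ∈ Icc 1 M, p j / ((j : ℝ) + 1) := sum_le_sum fun j hj =>
        div_le_div_of_nonneg_left (hp j hj) (by positivity) (by gcongr; exact (mem_Icc.1 hj).2)

lemma inv_add_two_le_div_one_add {M u : ℝ} (hM : 0 ≤ M) (hu : (M + 1)⁻¹ ≤ u) :
    (M + 2)⁻¹ ≤ u / (1 + u) := by
  have hu0 : 0 < u := (inv_pos.2 (by linarith)).trans_le hu
  have hu1 : 1 ≤ u * (M + 1) := by rwa [inv_le_iff_one_le_mul₀ (by linarith)] at hu
  rw [inv_eq_one_div, div_le_div_iff₀ (by linarith) (by linarith)]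
  linarith

lemma v_eq_of_pos_of_lt (a c : ℝ) {n s : ℕ} (h0 : 0 < s) (h : s < n) :
    v a c n s = (a - c) ^ 2 * ((1 - F n s) / (2 - F n s)) ^ 2 := by
  rw [v, if_neg h.ne, if_neg h0.ne', ← one_sub_F_eq_sum h, div_pow]
  ring

lemma gamma_le_v (a c : ℝ) {n s : ℕ} (h0 : 0 < s) (h : s < n) :
    (a - c) ^ 2 / ((n : ℝ) - s + 2) ^ 2 ≤ v a c n s := by
  have hu : (((n - s : ℕ) : ℝ) + 1)⁻¹ ≤ 1 - F n s := by
    rw [one_sub_F_eq_sum h]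
    exact inv_succ_le_sum_div_succ (fun j _ => f_nonneg n s j) (sum_f_eq_one h)
  have hcast : (n : ℝ) - s + 2 = ((n - s : ℕ) : ℝ) + 2 := by
    rw [Nat.cast_sub h.le]
  rw [v_eq_of_pos_of_lt a c h0 h, show 2 - F n s = 1 + (1 - F n s) by ring, div_eq_mul_inv,
    ← inv_pow, hcast]
  gcongr
  exact inv_add_two_le_div_one_add (Nat.cast_nonneg _) hu

theorem stmt13_general (n : ℕ) (a c : ℝ)
    (vγ : ℕ → ℝ)
    (hvγ : ∀ s : ℕ, 1 ≤ s → s ≤ n - 1 →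
      vγ s = (a - c) ^ 2 / ((n : ℝ) - (s : ℝ) + 2) ^ 2)
    (hvγn : vγ n = (a - c) ^ 2 / 4) :
    ∀ x : Fin n → ℝ,
      ((∑ i, x i = v a c n n) ∧
        ∀ S : Finset (Fin n), S.Nonempty → v a c n S.card ≤ ∑ i ∈ S, x i) →
      ((∑ i, x i = vγ n) ∧
        ∀ S : Finset (Fin n), S.Nonempty → vγ S.card ≤ ∑ i ∈ S, x i) := by
  rintro x ⟨hsum, hcore⟩
  have htotal : ∑ i, x i = vγ n := by rw [hsum, hvγn, v, if_pos rfl]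
  refine ⟨htotal, fun S hS => ?_⟩
  obtain hlt | heq := (card_le_univ S).lt_or_eq
  · rw [Fintype.card_fin] at hlt
    rw [hvγ _ hS.card_pos (by omega)]
    exact (gamma_le_v a c hS.card_pos hlt).trans (hcore S hS)
  · rw [(card_eq_iff_eq_univ S).1 heq, card_univ, Fintype.card_fin, htotal]

/-- every core allocation of the uniform-distribution game `(Fin n, v^n)`
is a core allocation of the γ-game with `v_γ^n(s) = (a-c)²/(n-s+2)²` for
`1 ≤ s ≤ n-1` and `v_γ^n(n) = (a-c)²/4`: the core of `(N,v)` refines the γ-core. -/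
theorem stmt13 (n : ℕ) (hn : 2 ≤ n) (a c : ℝ) (hc : 0 < c) (hca : c < a)
    (vγ : ℕ → ℝ)
    (hvγ : ∀ s : ℕ, 1 ≤ s → s ≤ n - 1 →
      vγ s = (a - c) ^ 2 / ((n : ℝ) - (s : ℝ) + 2) ^ 2)
    (hvγn : vγ n = (a - c) ^ 2 / 4) :
    ∀ x : Fin n → ℝ,
      ((∑ i, x i = v a c n n) ∧
        ∀ S : Finset (Fin n), S.Nonempty → v a c n S.card ≤ ∑ i ∈ S, x i) →
      ((∑ i, x i = vγ n) ∧
        ∀ S : Finset (Fin n), S.Nonempty → vγ S.card ≤ ∑ i ∈ S, x i) :=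
  stmt13_general n a c vγ hvγ hvγn
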